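/- KL projection onto the mixture class is unique: if F_L = {f_H : H ∈ P([-L,L])} with f_H the density of H ⋆ N(0,σ²), and f₁, f₂ ∈ F_L both minimize KL(p ‖ ·) over F_L for a density p > 0 everywhere with finite minimum, then f₁ = f₂ everywhere. -/

import Mathlib

open MeasureTheory ProbabilityTheory Real

/-- Density of the Gaussian location mixture `H ⋆ N(0,σ²)`. -/
noncomputable def mixDensity (σ : ℝ) (H : Measure ℝ) : ℝ → ℝ :=
  fun x => ∫ ξ, gaussianPDFReal ξ ((σ ^ 2).toNNReal) x ∂H

/-- Membership in the class `F_L = {f_H : H ∈ P([-L,L])}`. -/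
def InMixtureClass (σ L : ℝ) (f : ℝ → ℝ) : Prop :=
  ∃ H : Measure ℝ, IsProbabilityMeasure H ∧ H (Set.Icc (-L) L)ᶜ = 0 ∧ f = mixDensity σ H

/-- Kullback–Leibler divergence `KL(p ‖ f) = ∫ p log(p/f)`. -/
noncomputable def klDiv' (p f : ℝ → ℝ) : ℝ := ∫ x, p x * Real.log (p x / f x)

/-! If `f₁, f₂` both minimise `KL(p ‖ ·)` over the convex class `F_L`, their midpoint `g` lies
in `F_L`, whence `KL(p ‖ g) ≥ (KL(p ‖ f₁) + KL(p ‖ f₂)) / 2`. Pointwise the integrands satisfy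
the reverse inequality, strictly wherever `f₁ ≠ f₂`, by strict convexity of `-log`; so `f₁ = f₂`
almost everywhere, and everywhere since mixture densities are continuous. -/

open scoped NNReal

section Gaussian

variable (v : ℝ≥0) (m x : ℝ)

lemma gaussianPDFReal_le_inv_sqrt : gaussianPDFReal m v x ≤ (√(2 * π * v))⁻¹ := by
  rw [gaussianPDFReal]
  refine mul_le_of_le_one_right (by positivity) (exp_le_one_iff.mpr ?_)
  exact div_nonpos_of_nonpos_of_nonneg (neg_nonpos.mpr (sq_nonneg _)) (by positivity)

lemma continuous_gaussianPDFReal_mean : Continuous fun m => gaussianPDFReal m v x := by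
  unfold gaussianPDFReal; fun_prop

lemma continuous_gaussianPDFReal : Continuous fun x => gaussianPDFReal m v x := by
  unfold gaussianPDFReal; fun_prop

lemma norm_gaussianPDFReal_le : ‖gaussianPDFReal m v x‖ ≤ (√(2 * π * v))⁻¹ := by
  rw [norm_of_nonneg (gaussianPDFReal_nonneg _ _ _)]
  exact gaussianPDFReal_le_inv_sqrt v m x

lemma integrable_gaussianPDFReal_mean (H : Measure ℝ) [IsFiniteMeasure H] :
    Integrable (fun m => gaussianPDFReal m v x) H :=
  (integrable_const _).mono' (continuous_gaussianPDFReal_mean v x).aestronglyMeasurable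
    (ae_of_all _ fun m => norm_gaussianPDFReal_le v m x)

end Gaussian

section MixDensity

variable (σ : ℝ)

lemma continuous_mixDensity (H : Measure ℝ) [IsFiniteMeasure H] : Continuous (mixDensity σ H) :=
  continuous_of_dominated
    (fun x => (continuous_gaussianPDFReal_mean _ x).aestronglyMeasurable)
    (fun x => ae_of_all _ fun m => norm_gaussianPDFReal_le _ m x) (integrable_const _)
    (ae_of_all _ fun m => continuous_gaussianPDFReal _ m)

lemma mixDensity_pos {σ : ℝ} (hσ : σ ≠ 0) (H : Measure ℝ) [IsFiniteMeasure H] [NeZero H]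
    (x : ℝ) : 0 < mixDensity σ H x := by
  have hv : (σ ^ 2).toNNReal ≠ 0 := by simpa using hσ
  rw [mixDensity, integral_pos_iff_support_of_nonneg (fun m => gaussianPDFReal_nonneg _ _ _)
    (integrable_gaussianPDFReal_mean _ _ _)]
  simpa [Function.support, fun m => (gaussianPDFReal_pos m _ x hv).ne'] using NeZero.ne H

lemma mixDensity_add (H₁ H₂ : Measure ℝ) [IsFiniteMeasure H₁] [IsFiniteMeasure H₂] :
    mixDensity σ (H₁ + H₂) = mixDensity σ H₁ + mixDensity σ H₂ := by
  ext x
  exact integral_add_measure (integrable_gaussianPDFReal_mean _ _ _)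
    (integrable_gaussianPDFReal_mean _ _ _)

lemma mixDensity_smul (c : ℝ≥0) (H : Measure ℝ) : mixDensity σ (c • H) = c • mixDensity σ H := by
  ext x
  exact integral_smul_nnreal_measure _ c

end MixDensity

lemma convex_setOf_inMixtureClass (σ L : ℝ) : Convex ℝ {f | InMixtureClass σ L f} := by
  rintro _ ⟨H₁, hH₁, hsupp₁, rfl⟩ _ ⟨H₂, hH₂, hsupp₂, rfl⟩ a b ha hb hab
  refine ⟨a.toNNReal • H₁ + b.toNNReal • H₂, ⟨?_⟩, ?_, ?_⟩
  · simp [← ENNReal.coe_add, ← toNNReal_add ha hb, hab]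
  · simp [hsupp₁, hsupp₂]
  · rw [mixDensity_add, mixDensity_smul, mixDensity_smul]
    simp [NNReal.smul_def, ha, hb]

namespace InMixtureClass

variable {σ L : ℝ} {f : ℝ → ℝ}

lemma continuous (hf : InMixtureClass σ L f) : Continuous f := by
  obtain ⟨H, _, -, rfl⟩ := hf
  exact continuous_mixDensity σ H

lemma pos (hσ : σ ≠ 0) (hf : InMixtureClass σ L f) (x : ℝ) : 0 < f x := by
  obtain ⟨H, _, -, rfl⟩ := hf
  exact mixDensity_pos hσ H x

end InMixtureClass

lemma strictConvexOn_mul_log_div {P : ℝ} (hP : 0 < P) :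
    StrictConvexOn ℝ (Set.Ioi 0) fun t => P * log (P / t) := by
  refine ⟨convex_Ioi 0, fun x hx y hy hxy a b ha hb hab => ?_⟩
  have hlog := strictConcaveOn_log_Ioi.2 hx hy hxy ha hb hab
  have hxy_pos : 0 < a • x + b • y := convex_Ioi 0 hx hy ha.le hb.le hab
  simp only [smul_eq_mul] at hlog hxy_pos ⊢
  rw [log_div hP.ne' hxy_pos.ne', log_div hP.ne' (Set.mem_Ioi.mp hx).ne',
    log_div hP.ne' (Set.mem_Ioi.mp hy).ne']
  linear_combination mul_lt_mul_of_pos_left hlog hP - (P * log P) * hab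

lemma ae_eq_of_klDiv'_convexComb_ge {p f₁ f₂ : ℝ → ℝ} {a b : ℝ} (ha : 0 < a) (hb : 0 < b)
    (hab : a + b = 1) (hp : ∀ x, 0 < p x) (hf₁ : ∀ x, 0 < f₁ x) (hf₂ : ∀ x, 0 < f₂ x)
    (hi₁ : Integrable fun x => p x * log (p x / f₁ x))
    (hi₂ : Integrable fun x => p x * log (p x / f₂ x))
    (hi : Integrable fun x => p x * log (p x / (a • f₁ + b • f₂) x))
    (hle : a * klDiv' p f₁ + b * klDiv' p f₂ ≤ klDiv' p (a • f₁ + b • f₂)) :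
    f₁ =ᵐ[volume] f₂ := by
  have hconv x := strictConvexOn_mul_log_div (hp x)
  have hpointwise : (fun x => p x * log (p x / (a • f₁ + b • f₂) x)) ≤
      fun x => a * (p x * log (p x / f₁ x)) + b * (p x * log (p x / f₂ x)) := fun x =>
    (hconv x).convexOn.2 (hf₁ x) (hf₂ x) ha.le hb.le hab
  have hi_combo := (hi₁.const_mul a).add (hi₂.const_mul b)
  have hint_eq : ∫ x, p x * log (p x / (a • f₁ + b • f₂) x) =
      ∫ x, a * (p x * log (p x / f₁ x)) + b * (p x * log (p x / f₂ x)) := by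
    refine le_antisymm (integral_mono hi hi_combo hpointwise) ?_
    rw [integral_add (hi₁.const_mul a) (hi₂.const_mul b), integral_const_mul,
      integral_const_mul]
    exact hle
  filter_upwards [(integral_eq_iff_of_ae_le hi hi_combo (ae_of_all _ hpointwise)).mp hint_eq]
    with x hx
  by_contra hne
  exact (hconv x).2 (hf₁ x) (hf₂ x) hne ha hb hab |>.ne hx

theorem kl_projection_unique_general
    (σ L : ℝ) (hσ : 0 < σ)
    (p : ℝ → ℝ) (hp : ∀ x, 0 < p x)
    (f₁ f₂ : ℝ → ℝ)
    (h₁ : InMixtureClass σ L f₁) (h₂ : InMixtureClass σ L f₂)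
    (hfin : ∀ g, InMixtureClass σ L g →
      Integrable (fun x => p x * Real.log (p x / g x)))
    (hmin₁ : ∀ g, InMixtureClass σ L g → klDiv' p f₁ ≤ klDiv' p g)
    (hmin₂ : ∀ g, InMixtureClass σ L g → klDiv' p f₂ ≤ klDiv' p g) :
    f₁ = f₂ := by
  have hmid : InMixtureClass σ L ((1 / 2 : ℝ) • f₁ + (1 / 2 : ℝ) • f₂) :=
    convex_setOf_inMixtureClass σ L h₁ h₂ (by norm_num) (by norm_num) (by norm_num)
  have hae : f₁ =ᵐ[volume] f₂ :=
    ae_eq_of_klDiv'_convexComb_ge (by norm_num) (by norm_num) (by norm_num) hp (h₁.pos hσ.ne')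
      (h₂.pos hσ.ne') (hfin f₁ h₁) (hfin f₂ h₂) (hfin _ hmid)
      (by linarith [hmin₁ _ hmid, hmin₂ _ hmid])
  exact (h₁.continuous.ae_eq_iff_eq volume h₂.continuous).mp hae

/-- KL projection onto the mixture class is unique: if `f₁, f₂ ∈ F_L` both minimize
`KL(p ‖ ·)` over `F_L` for an everywhere-positive density `p`, with finite KL values on the
class, then `f₁ = f₂` everywhere. -/
theorem kl_projection_unique
    (σ L : ℝ) (hσ : 0 < σ) (hL : 0 < L)
    (p : ℝ → ℝ) (hpm : Measurable p) (hp : ∀ x, 0 < p x) (hpd : ∫ x, p x = 1)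
    (f₁ f₂ : ℝ → ℝ)
    (h₁ : InMixtureClass σ L f₁) (h₂ : InMixtureClass σ L f₂)
    (hfin : ∀ g, InMixtureClass σ L g →
      Integrable (fun x => p x * Real.log (p x / g x)))
    (hmin₁ : ∀ g, InMixtureClass σ L g → klDiv' p f₁ ≤ klDiv' p g)
    (hmin₂ : ∀ g, InMixtureClass σ L g → klDiv' p f₂ ≤ klDiv' p g) :
    f₁ = f₂ :=
  kl_projection_unique_general σ L hσ p hp f₁ f₂ h₁ h₂ hfin hmin₁ hmin₂
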